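/- Let P : ℂ → ℂ be a monic polynomial of degree D ≥ 2, with filled Julia set K_P and Green's function G. For every s > 0, the set of singularities of G at potential greater than s, namely {z ∈ ℂ ∖ K_P : the real Fréchet derivative of G vanishes at z and G(z) > s}, is finite. -/

import Mathlib

/-!
Near `∞` the Green function is `G = log ‖z‖ + Re h`, where
`h = ∑ₖ D^{-(k+1)} log (P(Pᵏ z) / (Pᵏ z)^D)` is holomorphic and uniformly small; by Cauchy's
estimate `1/z + h'(z)` does not vanish, so `G` has no singularities near `∞`. Since
`G ∘ Pᴺ = Dᴺ G`, an escaping singularity `z` of `G` is a critical point of an iterate `Pᴺ` whose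
value lies near `∞`, so some `Pʲ z` is a critical point `c` of `P`. Then `Dʲ s < Dʲ G(z) = G(c)`,
which bounds `j` in terms of `s` and the finitely many critical values `G(c)`: all singularities
at potential above `s` are critical points of one fixed iterate `Pᴷ`.
-/

open Filter Topology Bornology Polynomial Set Complex Metric

def IsGreenFunction (f : ℂ → ℂ) (d : ℕ) (G : ℂ → ℝ) : Prop :=
  ∀ z, Tendsto (fun n : ℕ => (1 / (d : ℝ) ^ n) * max (Real.log ‖f^[n] z‖) 0) atTop (𝓝 (G z))

namespace IsGreenFunction

variable {f : ℂ → ℂ} {d : ℕ} {G : ℂ → ℝ}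

theorem map_apply (hG : IsGreenFunction f d G) (hd : d ≠ 0) (z : ℂ) : G (f z) = d * G z := by
  refine tendsto_nhds_unique (hG (f z)) ?_
  refine (((hG z).comp (tendsto_add_atTop_nat 1)).const_mul (d : ℝ)).congr fun n => ?_
  simp only [Function.comp_apply, Function.iterate_succ_apply, pow_succ]
  field_simp

theorem iterate_apply (hG : IsGreenFunction f d G) (hd : d ≠ 0) (n : ℕ) (z : ℂ) :
    G (f^[n] z) = d ^ n * G z := by
  induction n with
  | zero => simp
  | succ n ih => rw [Function.iterate_succ_apply', hG.map_apply hd, ih, pow_succ]; ring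

end IsGreenFunction

theorem hasDerivAt_iterate {𝕜 : Type*} [NontriviallyNormedField 𝕜] {f : 𝕜 → 𝕜}
    (hf : Differentiable 𝕜 f) (n : ℕ) (z : 𝕜) :
    HasDerivAt f^[n] (∏ k ∈ Finset.range n, deriv f (f^[k] z)) z := by
  induction n with
  | zero => simpa using hasDerivAt_id z
  | succ n ih =>
    rw [Finset.prod_range_succ, Function.iterate_succ', mul_comm]
    exact (hf _).hasDerivAt.comp z ih

theorem exists_hasFDerivAt_ne_zero_of_eventuallyEq_re {G : ℂ → ℝ} {H : ℂ → ℂ} {a x : ℂ} {c : ℝ}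
    (hH : HasDerivAt H a x) (ha : a ≠ 0) (hGH : G =ᶠ[𝓝 x] fun v => (H v).re + c) :
    ∃ L : ℂ →L[ℝ] ℝ, HasFDerivAt G L x ∧ L ≠ 0 := by
  refine ⟨reCLM.comp (a • 1),
    ((reCLM.hasFDerivAt.comp x hH.complexToReal_fderiv).add_const c).congr_of_eventuallyEq hGH,
    fun h => ha ?_⟩
  have h' := congr($h (starRingEnd ℂ a))
  simpa [Complex.mul_conj, Complex.normSq_eq_zero] using h'

theorem eq_zero_of_fderiv_eq_zero_of_comp_eq_mul {G : ℂ → ℝ} {F : ℂ → ℂ} {c : ℝ} {b z : ℂ}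
    {L : ℂ →L[ℝ] ℝ} (hc : c ≠ 0) (hGF : ∀ v, G (F v) = c * G v) (hF : HasDerivAt F b z)
    (hL : HasFDerivAt G L (F z)) (hL0 : L ≠ 0) (hz : fderiv ℝ G z = 0) : b = 0 := by
  by_contra hb
  have hG : HasFDerivAt G (c⁻¹ • L.comp (b • (1 : ℂ →L[ℝ] ℂ))) z := by
    have hGc : (fun v => c⁻¹ * (G ∘ F) v) = G := funext fun v => by simp [hGF, hc]
    exact hGc ▸ (hL.comp z hF.complexToReal_fderiv).const_mul c⁻¹
  apply hL0
  ext v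
  simpa [hc, mul_div_cancel₀ v hb] using congr($(hG.fderiv.symm.trans hz) (v / b))

noncomputable def greenSeries (f g : ℂ → ℂ) (d : ℕ) (w : ℂ) : ℂ :=
  ∑' k : ℕ, ((d : ℝ) ^ (k + 1))⁻¹ • g (f^[k] w)

section GreenSeries

variable {f g : ℂ → ℂ} {d : ℕ} {U : Set ℂ} {B : ℝ}

theorem norm_greenSeries_term_le (hd : 2 ≤ d) (hfU : MapsTo f U U) (hgB : ∀ q ∈ U, ‖g q‖ ≤ B)
    {w : ℂ} (hw : w ∈ U) (k : ℕ) :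
    ‖((d : ℝ) ^ (k + 1))⁻¹ • g (f^[k] w)‖ ≤ B / 2 / 2 ^ k := by
  rw [norm_smul, norm_inv, norm_pow, Real.norm_natCast]
  calc ((d : ℝ) ^ (k + 1))⁻¹ * ‖g (f^[k] w)‖ ≤ ((2 : ℝ) ^ (k + 1))⁻¹ * ‖g (f^[k] w)‖ := by
        gcongr; exact_mod_cast hd
    _ ≤ ((2 : ℝ) ^ (k + 1))⁻¹ * B := by gcongr; exact hgB _ (hfU.iterate k hw)
    _ = B / 2 / 2 ^ k := by rw [pow_succ]; field_simp

theorem hasSum_greenSeries (hd : 2 ≤ d) (hfU : MapsTo f U U) (hgB : ∀ q ∈ U, ‖g q‖ ≤ B)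
    {w : ℂ} (hw : w ∈ U) :
    HasSum (fun k : ℕ => ((d : ℝ) ^ (k + 1))⁻¹ • g (f^[k] w)) (greenSeries f g d w) :=
  ((summable_geometric_two' B).of_norm_bounded (norm_greenSeries_term_le hd hfU hgB hw)).hasSum

theorem norm_greenSeries_le (hd : 2 ≤ d) (hfU : MapsTo f U U) (hgB : ∀ q ∈ U, ‖g q‖ ≤ B)
    {w : ℂ} (hw : w ∈ U) : ‖greenSeries f g d w‖ ≤ B :=
  tsum_of_norm_bounded (hasSum_geometric_two' B) (norm_greenSeries_term_le hd hfU hgB hw)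

theorem differentiableOn_greenSeries (hd : 2 ≤ d) (hU : IsOpen U) (hf : Differentiable ℂ f)
    (hfU : MapsTo f U U) (hg : DifferentiableOn ℂ g U) (hgB : ∀ q ∈ U, ‖g q‖ ≤ B) :
    DifferentiableOn ℂ (greenSeries f g d) U :=
  differentiableOn_tsum_of_summable_norm (summable_geometric_two' B)
    (fun k => (hg.comp (hf.iterate k).differentiableOn (hfU.iterate k)).fun_const_smul _) hU
    (fun k _ hw => norm_greenSeries_term_le hd hfU hgB hw k)

theorem IsGreenFunction.eq_log_norm_add_re_greenSeries {G : ℂ → ℝ} (hG : IsGreenFunction f d G)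
    (hd : 2 ≤ d) (hfU : MapsTo f U U) (hU : ∀ q ∈ U, 1 ≤ ‖q‖) (hgB : ∀ q ∈ U, ‖g q‖ ≤ B)
    (hg : ∀ q ∈ U, (g q).re = Real.log ‖f q‖ - d * Real.log ‖q‖) {w : ℂ} (hw : w ∈ U) :
    G w = Real.log ‖w‖ + (greenSeries f g d w).re := by
  have hpartial : ∀ n, ∑ k ∈ Finset.range n, (((d : ℝ) ^ (k + 1))⁻¹ • g (f^[k] w)).re
      = 1 / (d : ℝ) ^ n * Real.log ‖f^[n] w‖ - Real.log ‖w‖ := by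
    intro n
    induction n with
    | zero => simp
    | succ n ih =>
      have hd0 : (d : ℝ) ≠ 0 := by positivity
      rw [Finset.sum_range_succ, ih, Complex.smul_re, hg _ (hfU.iterate n hw),
        Function.iterate_succ_apply', smul_eq_mul, pow_succ]
      field_simp
      ring
  have hlim := ((Complex.hasSum_re (hasSum_greenSeries hd hfU hgB hw)).tendsto_sum_nat).const_add
    (Real.log ‖w‖)
  refine tendsto_nhds_unique (hG w) (hlim.congr fun n => ?_)
  rw [hpartial, max_eq_left (Real.log_nonneg (hU _ (hfU.iterate n hw)))]
  ring

end GreenSeries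

theorem IsGreenFunction.exists_hasFDerivAt_ne_zero_of_lt_norm {f g : ℂ → ℂ} {d : ℕ} {G : ℂ → ℝ}
    {R : ℝ} (hG : IsGreenFunction f d G) (hd : 2 ≤ d) (hR : 1 ≤ R) (hf : Differentiable ℂ f)
    (hfU : MapsTo f {q | R < ‖q‖} {q | R < ‖q‖}) (hg : DifferentiableOn ℂ g {q | R < ‖q‖})
    (hgB : ∀ q ∈ {q : ℂ | R < ‖q‖}, ‖g q‖ ≤ 1 / 4)
    (hgre : ∀ q ∈ {q : ℂ | R < ‖q‖}, (g q).re = Real.log ‖f q‖ - d * Real.log ‖q‖)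
    {w : ℂ} (hw : 2 * R < ‖w‖) : ∃ L : ℂ →L[ℝ] ℝ, HasFDerivAt G L w ∧ L ≠ 0 := by
  set U := {q : ℂ | R < ‖q‖}
  have hU : IsOpen U := isOpen_lt continuous_const continuous_norm
  have hh := differentiableOn_greenSeries hd hU hf hfU hg hgB
  have hw0 : 0 < ‖w‖ := by linarith
  have hball : closedBall w (‖w‖ / 2) ⊆ U := fun v hv => by
    have := norm_sub_norm_le w v
    rw [mem_closedBall, dist_eq_norm, norm_sub_rev] at hv
    show R < ‖v‖
    linarith
  have hwU : w ∈ U := hball (mem_closedBall_self (by positivity))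
  have hderiv : ‖deriv (greenSeries f g d) w‖ ≤ 1 / 4 / (‖w‖ / 2) :=
    norm_deriv_le_of_forall_mem_sphere_norm_le (by positivity) (hh.diffContOnCl_ball hball)
      fun v hv => norm_greenSeries_le hd hfU hgB (hball (sphere_subset_closedBall hv))
  have hlog : HasDerivAt (fun v => log (v / w)) w⁻¹ w := by
    simpa [norm_pos_iff.1 hw0] using
      ((hasDerivAt_id w).div_const w).clog (by simp [norm_pos_iff.1 hw0])
  refine exists_hasFDerivAt_ne_zero_of_eventuallyEq_re (c := Real.log ‖w‖)
    (hlog.add (hh.differentiableAt (hU.mem_nhds hwU)).hasDerivAt) ?_ ?_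
  · intro ha
    rw [eq_neg_of_add_eq_zero_right ha, norm_neg, norm_inv] at hderiv
    field_simp at hderiv
    linarith
  · filter_upwards [hU.mem_nhds hwU] with v (hv : R < ‖v‖)
    have hv0 : v ≠ 0 := norm_pos_iff.1 (by linarith)
    rw [hG.eq_log_norm_add_re_greenSeries hd hfU (fun q (hq : R < ‖q‖) => by linarith) hgB hgre hv,
      Pi.add_apply, add_re, log_re, norm_div, Real.log_div (norm_ne_zero_iff.2 hv0) hw0.ne']
    ring

theorem Polynomial.finite_setOf_deriv_eval_eq_zero {p : ℂ[X]} (hp : p.natDegree ≠ 0) :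
    {z | deriv (p.eval ·) z = 0}.Finite := by
  simpa only [Polynomial.deriv, IsRoot.def] using finite_setOfPred_isRoot (derivative_ne_zero.2 hp)

namespace Polynomial.Monic

variable {P : ℂ[X]}

theorem tendsto_eval_div_pow_cobounded (hP : P.Monic) :
    Tendsto (fun q => P.eval q / q ^ P.natDegree) (cobounded ℂ) (𝓝 1) := by
  have h := isEquivalent_cobounded_leading_monomial (P := P)
  simp only [hP.leadingCoeff, one_mul] at h
  refine (Asymptotics.isEquivalent_iff_tendsto_one ?_).1 h
  filter_upwards [eventually_cobounded_le_norm 1] with q hq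
  exact pow_ne_zero _ (norm_pos_iff.1 (by linarith))

theorem exists_escape_radius (hP : P.Monic) (hd : 2 ≤ P.natDegree) :
    ∃ R, 1 ≤ R ∧ ∀ q : ℂ, R < ‖q‖ → R < ‖P.eval q‖ ∧
      P.eval q / q ^ P.natDegree ∈ slitPlane ∧ ‖log (P.eval q / q ^ P.natDegree)‖ ≤ 1 / 4 := by
  have hT := hP.tendsto_eval_div_pow_cobounded
  have hlog : Tendsto (fun q => log (P.eval q / q ^ P.natDegree)) (cobounded ℂ) (𝓝 0) := by
    simpa [Function.comp_def] using (continuousAt_clog one_mem_slitPlane).tendsto.comp hT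
  have hev : ∀ᶠ q in cobounded ℂ, 2 ≤ ‖q‖ ∧ 1 / 2 ≤ ‖P.eval q / q ^ P.natDegree‖ ∧
      P.eval q / q ^ P.natDegree ∈ slitPlane ∧ ‖log (P.eval q / q ^ P.natDegree)‖ ≤ 1 / 4 :=
    (eventually_cobounded_le_norm 2).and <|
      (hT.norm.eventually (le_mem_nhds (by norm_num))).and <|
      (hT.eventually (isOpen_slitPlane.mem_nhds one_mem_slitPlane)).and
      (hlog.norm.eventually (ge_mem_nhds (by norm_num)))
  obtain ⟨r, -, hr⟩ := hasBasis_cobounded_norm.eventually_iff.1 hev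
  refine ⟨max r 1, le_max_right _ _, fun q hq => ?_⟩
  obtain ⟨h2, hhalf, hslit, hlog⟩ := hr (le_max_left r 1 |>.trans hq.le)
  refine ⟨?_, hslit, hlog⟩
  have hq0 : q ≠ 0 := norm_pos_iff.1 (by linarith)
  calc max r 1 < ‖q‖ := hq
    _ ≤ ‖q‖ ^ 2 / 2 := by nlinarith
    _ ≤ ‖q‖ ^ P.natDegree / 2 := by gcongr; linarith
    _ ≤ ‖q‖ ^ P.natDegree * ‖P.eval q / q ^ P.natDegree‖ := by
      rw [div_eq_mul_one_div (‖q‖ ^ _)]; gcongr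
    _ = ‖P.eval q‖ := by rw [norm_div, norm_pow]; field_simp

end Polynomial.Monic

namespace IsGreenFunction

variable {P : ℂ[X]} {G : ℂ → ℝ}

theorem exists_hasFDerivAt_ne_zero (hP : P.Monic) (hd : 2 ≤ P.natDegree)
    (hG : IsGreenFunction (P.eval ·) P.natDegree G) :
    ∃ R, ∀ w : ℂ, R < ‖w‖ → ∃ L : ℂ →L[ℝ] ℝ, HasFDerivAt G L w ∧ L ≠ 0 := by
  obtain ⟨R, hR1, hR⟩ := hP.exists_escape_radius hd
  have hU0 : ∀ q : ℂ, R < ‖q‖ → q ≠ 0 := fun q hq => norm_pos_iff.1 (by linarith)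
  refine ⟨2 * R, fun w hw => hG.exists_hasFDerivAt_ne_zero_of_lt_norm hd hR1 P.differentiable
    (fun q hq => (hR q hq).1) (fun q hq => ?_) (fun q hq => (hR q hq).2.2) (fun q hq => ?_) hw⟩
  · exact ((P.differentiableAt.div (differentiableAt_pow _) (pow_ne_zero _ (hU0 q hq))).clog
      (hR q hq).2.1).differentiableWithinAt
  · rw [log_re, norm_div, norm_pow, Real.log_div (norm_ne_zero_iff.2 (hU0 _ (hR q hq).1))
      (pow_ne_zero _ (norm_ne_zero_iff.2 (hU0 q hq))), Real.log_pow]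

theorem exists_deriv_eval_iterate_eq_zero (hP : P.Monic) (hd : 2 ≤ P.natDegree)
    (hG : IsGreenFunction (P.eval ·) P.natDegree G) {z : ℂ}
    (hz : ¬IsBounded (range fun n => (P.eval ·)^[n] z)) (hcrit : fderiv ℝ G z = 0) :
    ∃ j, deriv (P.eval ·) ((P.eval ·)^[j] z) = 0 := by
  obtain ⟨R, hR⟩ := hG.exists_hasFDerivAt_ne_zero hP hd
  obtain ⟨N, hN⟩ : ∃ N, R < ‖(P.eval ·)^[N] z‖ := by
    by_contra! hbdd
    exact hz (isBounded_iff_forall_norm_le.2 ⟨R, forall_mem_range.2 hbdd⟩)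
  obtain ⟨L, hL, hL0⟩ := hR _ hN
  obtain ⟨j, -, hj⟩ := Finset.prod_eq_zero_iff.1 <|
    eq_zero_of_fderiv_eq_zero_of_comp_eq_mul (by positivity) (hG.iterate_apply (by omega) N)
      (hasDerivAt_iterate P.differentiable N z) hL hL0 hcrit
  exact ⟨j, hj⟩

end IsGreenFunction

/-- For every `s > 0` there are only finitely many singularities of `G`
(critical points of `G` outside the filled Julia set) at potential greater than `s`. -/
theorem finitely_many_singularities_above_potential (D : ℕ) (hD : 2 ≤ D)
    (P : Polynomial ℂ) (hmonic : P.Monic) (hdeg : P.natDegree = D) (G : ℂ → ℝ)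
    (hG : ∀ z : ℂ, Tendsto (fun n : ℕ =>
        (1 / (D : ℝ) ^ n) *
          max (Real.log ‖(fun w => P.eval w)^[n] z‖) 0)
      atTop (𝓝 (G z))) :
    ∀ s : ℝ, 0 < s →
      {z : ℂ |
        ¬ Bornology.IsBounded (Set.range fun n : ℕ => (fun w => P.eval w)^[n] z) ∧
        fderiv ℝ G z = 0 ∧ s < G z}.Finite := by
  subst hdeg
  intro s hs
  have hG : IsGreenFunction (P.eval ·) P.natDegree G := hG
  have hd0 : P.natDegree ≠ 0 := by omega
  obtain ⟨M, hM⟩ := ((P.finite_setOf_deriv_eval_eq_zero hd0).image G).bddAbove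
  obtain ⟨K, hK⟩ := pow_unbounded_of_one_lt (M / s) (by exact_mod_cast hD : (1 : ℝ) < P.natDegree)
  rw [div_lt_iff₀ hs] at hK
  refine ((P.comp^[K] X).finite_setOf_deriv_eval_eq_zero (by
    simp [natDegree_iterate_comp, hd0])).subset fun z ⟨hz, hcrit, hsz⟩ => ?_
  obtain ⟨j, hj⟩ := hG.exists_deriv_eval_iterate_eq_zero hmonic hD hz hcrit
  have hjK : j < K := by
    by_contra! hKj
    have : (P.natDegree : ℝ) ^ K * s ≤ G ((P.eval ·)^[j] z) := by
      rw [hG.iterate_apply hd0]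
      gcongr
      exact_mod_cast Nat.one_le_iff_ne_zero.2 hd0
    linarith [hM ⟨_, hj, rfl⟩]
  have hiter : (P.eval ·)^[K] = fun z => (P.comp^[K] X).eval z :=
    funext fun z => by rw [iterate_comp_eval, eval_X]
  show deriv _ z = 0
  rw [← hiter, (hasDerivAt_iterate P.differentiable K z).deriv]
  exact Finset.prod_eq_zero (Finset.mem_range.2 hjK) hj
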